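/- Let $(a_i)_{i \in [n]}$ and $(b_i)_{i \in [n]}$ be sequences of positive reals with $a_i / b_i \ge 1$ for all $i$. Then $\sum_{i \in [n]} a_i / \log(e^2 a_i / b_i) \le (\sum_{i \in [n]} a_i) / \log(e^2 \sum_{i \in [n]} a_i / \sum_{i \in [n]} b_i)$, where $\log$ is the natural logarithm and $n \ge 1$. -/

import Mathlib

/-!
Writing `f r = r / log (e² r)`, each term is `a i / log (e² a i / b i) = b i * f (a i / b i)`.
Since `f` is concave on `[1, ∞)`, Jensen's inequality for the weights `b i / ∑ b` gives
`∑ b i * f (a i / b i) ≤ (∑ b) * f (∑ a / ∑ b)`, which is the right-hand side.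
-/

open Real Finset

/-- Jensen's inequality in perspective form: `(a, b) ↦ b * f (a / b)` is superadditive. -/
theorem ConcaveOn.sum_mul_map_div_le {ι : Type*} {s : Set ℝ} {f : ℝ → ℝ}
    (hf : ConcaveOn ℝ s f) {t : Finset ι} (ht : t.Nonempty) {a b : ι → ℝ}
    (hb : ∀ i ∈ t, 0 < b i) (hs : ∀ i ∈ t, a i / b i ∈ s) :
    ∑ i ∈ t, b i * f (a i / b i) ≤ (∑ i ∈ t, b i) * f ((∑ i ∈ t, a i) / ∑ i ∈ t, b i) := by
  set B := ∑ i ∈ t, b i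
  have hB : 0 < B := sum_pos hb ht
  have hw : ∑ i ∈ t, b i / B = 1 := by rw [← sum_div, div_self hB.ne']
  have hmean : ∑ i ∈ t, (b i / B) • (a i / b i) = (∑ i ∈ t, a i) / B := by
    rw [sum_div]
    refine sum_congr rfl fun i hi => ?_
    rw [smul_eq_mul, mul_comm, div_mul_div_cancel₀ (hb i hi).ne']
  have hjensen := hf.le_map_sum (fun i hi => (div_pos (hb i hi) hB).le) hw hs
  rw [hmean] at hjensen
  calc ∑ i ∈ t, b i * f (a i / b i)
      = B * ∑ i ∈ t, (b i / B) • f (a i / b i) := by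
        rw [mul_sum]
        refine sum_congr rfl fun i _ => ?_
        rw [smul_eq_mul, ← mul_assoc, mul_div_cancel₀ _ hB.ne']
    _ ≤ B * f ((∑ i ∈ t, a i) / B) := mul_le_mul_of_nonneg_left hjensen hB.le

lemma hasDerivAt_div_two_add_log {x : ℝ} (hx : 0 < x) (hlog : 2 + log x ≠ 0) :
    HasDerivAt (fun r : ℝ => r / (2 + log r)) ((1 + log x) / (2 + log x) ^ 2) x := by
  have hden : HasDerivAt (fun r : ℝ => 2 + log r) x⁻¹ x :=
    (hasDerivAt_log hx.ne').const_add 2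
  refine ((hasDerivAt_id' x).div hden hlog).congr_deriv ?_
  rw [one_mul, mul_inv_cancel₀ hx.ne']
  ring

lemma concaveOn_div_two_add_log : ConcaveOn ℝ (Set.Ici 1) (fun r : ℝ => r / (2 + log r)) := by
  have hpos : ∀ x : ℝ, 1 ≤ x → 0 < 2 + log x := fun x hx => by linarith [log_nonneg hx]
  have hderiv : ∀ x : ℝ, 1 ≤ x → HasDerivAt (fun r : ℝ => r / (2 + log r))
      ((1 + log x) / (2 + log x) ^ 2) x := fun x hx =>
    hasDerivAt_div_two_add_log (by linarith) (hpos x hx).ne'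
  refine AntitoneOn.concaveOn_of_deriv (convex_Ici 1) ?_ ?_ ?_
  · exact fun x hx => (hderiv x hx).continuousAt.continuousWithinAt
  · rw [interior_Ici]
    exact fun x hx => (hderiv x (le_of_lt hx)).differentiableAt.differentiableWithinAt
  · rw [interior_Ici]
    intro x hx y hy hxy
    have hx1 : 1 ≤ x := le_of_lt hx
    rw [(hderiv x hx1).deriv, (hderiv y (le_of_lt hy)).deriv]
    have hlx : 0 ≤ log x := log_nonneg hx1
    have hlxy : log x ≤ log y := log_le_log (by linarith) hxy
    rw [div_le_div_iff₀ (pow_pos (hpos y (le_of_lt hy)) 2) (pow_pos (hpos x hx1) 2)]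
    nlinarith [mul_nonneg hlx (sub_nonneg.mpr hlxy), sub_nonneg.mpr hlxy]

lemma concaveOn_div_log_exp_two_mul :
    ConcaveOn ℝ (Set.Ici 1) (fun r : ℝ => r / log (exp 2 * r)) :=
  concaveOn_div_two_add_log.congr fun r hr => by
    rw [log_mul (exp_ne_zero 2) (by linarith [Set.mem_Ici.mp hr]), log_exp]

theorem sum_div_log_le (n : ℕ) (hn : 1 ≤ n) (a b : ℕ → ℝ)
    (hb : ∀ i < n, 0 < b i)
    (hab : ∀ i < n, 1 ≤ a i / b i) :
    ∑ i ∈ Finset.range n, a i / Real.log (Real.exp 2 * a i / b i) ≤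
      (∑ i ∈ Finset.range n, a i) /
        Real.log (Real.exp 2 * (∑ i ∈ Finset.range n, a i) / ∑ i ∈ Finset.range n, b i) := by
  have hne : (range n).Nonempty := ⟨0, mem_range.mpr hn⟩
  have hb' : ∀ i ∈ range n, 0 < b i := fun i hi => hb i (mem_range.mp hi)
  have hperspective : ∀ {x y : ℝ}, y ≠ 0 → x / log (exp 2 * x / y) =
      y * (fun r => r / log (exp 2 * r)) (x / y) := by
    intro x y hy
    simp only [mul_div_assoc]
    field_simp
  have hJensen := concaveOn_div_log_exp_two_mul.sum_mul_map_div_le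
    hne hb' fun i hi => Set.mem_Ici.mpr (hab i (mem_range.mp hi))
  rw [sum_congr rfl fun i hi => hperspective (hb' i hi).ne',
    hperspective (sum_pos hb' hne).ne']
  exact hJensen
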